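/- Let T be an ideal irreducible positive operator on a real Banach lattice X with dim X > 1. If T*x* = λx* for some positive functional x* > 0 and λ ∈ ℝ, then x* is strictly positive and λ > 0. -/

import Mathlib

open scoped ENNReal

variable {X : Type*}

def IsPositiveOp [NormedAddCommGroup X] [Lattice X] [HasSolidNorm X] [IsOrderedAddMonoid X] [NormedSpace ℝ X]
    (T : X →L[ℝ] X) : Prop := ∀ x : X, 0 ≤ x → 0 ≤ T x

def IsClosedIdeal [NormedAddCommGroup X] [Lattice X] [HasSolidNorm X] [IsOrderedAddMonoid X] [NormedSpace ℝ X]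
    (J : Submodule ℝ X) : Prop :=
  IsClosed (J : Set X) ∧ ∀ x y : X, |y| ≤ |x| → x ∈ J → y ∈ J

def IdealIrreducible [NormedAddCommGroup X] [Lattice X] [HasSolidNorm X] [IsOrderedAddMonoid X] [NormedSpace ℝ X]
    (T : X →L[ℝ] X) : Prop :=
  ∀ J : Submodule ℝ X, IsClosedIdeal J → (∀ x ∈ J, T x ∈ J) → J = ⊥ ∨ J = ⊤

/-- A band: a solid submodule closed under existing suprema. -/
def IsBand [NormedAddCommGroup X] [Lattice X] [HasSolidNorm X] [IsOrderedAddMonoid X] [NormedSpace ℝ X]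
    (J : Submodule ℝ X) : Prop :=
  (∀ x y : X, |y| ≤ |x| → x ∈ J → y ∈ J) ∧
    ∀ (A : Set X) (x : X), A ⊆ (J : Set X) → IsLUB A x → x ∈ J

def BandIrreducible [NormedAddCommGroup X] [Lattice X] [HasSolidNorm X] [IsOrderedAddMonoid X] [NormedSpace ℝ X]
    (T : X →L[ℝ] X) : Prop :=
  ∀ J : Submodule ℝ X, IsBand J → (∀ x ∈ J, T x ∈ J) → J = ⊥ ∨ J = ⊤

def QuasiInterior [NormedAddCommGroup X] [Lattice X] [HasSolidNorm X] [IsOrderedAddMonoid X] [NormedSpace ℝ X]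
    (x : X) : Prop :=
  closure {y : X | ∃ c : ℝ, |y| ≤ c • x} = Set.univ

/-- A weak (order) unit. -/
def WeakUnit [NormedAddCommGroup X] [Lattice X] [HasSolidNorm X] [IsOrderedAddMonoid X] [NormedSpace ℝ X]
    (x : X) : Prop := 0 < x ∧ ∀ y : X, |y| ⊓ x = 0 → y = 0

def IsPositiveFunc [NormedAddCommGroup X] [Lattice X] [HasSolidNorm X] [IsOrderedAddMonoid X] [NormedSpace ℝ X]
    (f : StrongDual ℝ X) : Prop := ∀ x : X, 0 ≤ x → 0 ≤ f x

def StrictlyPositiveFunc [NormedAddCommGroup X] [Lattice X] [HasSolidNorm X] [IsOrderedAddMonoid X] [NormedSpace ℝ X]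
    (f : StrongDual ℝ X) : Prop := ∀ x : X, 0 < x → 0 < f x

noncomputable def adjOp [NormedAddCommGroup X] [Lattice X] [HasSolidNorm X] [IsOrderedAddMonoid X] [NormedSpace ℝ X]
    (T : X →L[ℝ] X) : StrongDual ℝ X →L[ℝ] StrongDual ℝ X :=
  (ContinuousLinearMap.compL ℝ X X ℝ).flip T

/-- `T` is σ-order continuous: `x_n ↓ 0` implies `T x_n ↓ 0`. -/
def SigmaOrderContinuousOp [NormedAddCommGroup X] [Lattice X] [HasSolidNorm X] [IsOrderedAddMonoid X] [NormedSpace ℝ X]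
    (T : X →L[ℝ] X) : Prop :=
  ∀ u : ℕ → X, Antitone u → IsGLB (Set.range u) 0 →
    IsGLB (Set.range fun n => T (u n)) 0

/-- A σ-order continuous functional. -/
def SigmaOrderContinuousFunc [NormedAddCommGroup X] [Lattice X] [HasSolidNorm X] [IsOrderedAddMonoid X] [NormedSpace ℝ X]
    (f : StrongDual ℝ X) : Prop :=
  ∀ u : ℕ → X, Antitone u → IsGLB (Set.range u) 0 →
    Filter.Tendsto (fun n => f (u n)) Filter.atTop (nhds 0)

/-- A set is relatively weakly compact. -/
def RelWeaklyCompact [NormedAddCommGroup X] [Lattice X] [HasSolidNorm X] [IsOrderedAddMonoid X] [NormedSpace ℝ X]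
    (s : Set X) : Prop :=
  IsCompact (closure ((toWeakSpace ℝ X) '' s))

/-- `T` is order weakly compact: `T[0,x]` is relatively weakly compact for all `x > 0`. -/
def OrderWeaklyCompactOp [NormedAddCommGroup X] [Lattice X] [HasSolidNorm X] [IsOrderedAddMonoid X] [NormedSpace ℝ X]
    (T : X →L[ℝ] X) : Prop :=
  ∀ x : X, 0 < x → RelWeaklyCompact (T '' Set.Icc 0 x)


/-!
The closed ideal `{x | f |x| = 0}` is `T`-invariant because `f ∘ T = l • f` and `|T x| ≤ T |x|`;
it is not all of `X` because `f ≠ 0`, so it is `0`, which is strict positivity of `f`. If `l ≤ 0`,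
then `f (T x) = l f x ≤ 0` for `x ≥ 0` forces `T x = 0`, so `T = 0` and every closed ideal is
invariant. The disjoint complement of `z⁺` then has to be trivial, so every `z` is comparable
with `0`; a totally ordered normed lattice is one-dimensional, since for `x > 0` the closed sets
`{t | t • x ≤ y}` and `{t | y ≤ t • x}` cover the connected line.
-/

open Filter Topology

section LatticeOrderedGroup

variable {α : Type*} [Lattice α] [AddCommGroup α] [IsOrderedAddMonoid α]

theorem nonneg_of_two_pow_nsmul_nonneg {a : α} : ∀ {k : ℕ}, 0 ≤ 2 ^ k • a → 0 ≤ a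
  | 0, h => by simpa using h
  | k + 1, h =>
    nonneg_of_two_pow_nsmul_nonneg (nsmul_two_semiclosed (by rwa [← mul_nsmul, ← pow_succ]))

theorem inf_add_le_inf_add_inf {a b c : α} (ha : 0 ≤ a) (hb : 0 ≤ b) (hc : 0 ≤ c) :
    (a + b) ⊓ c ≤ a ⊓ c + b ⊓ c := by
  have h₁ : (a + b) ⊓ c - a ≤ b ⊓ c :=
    le_inf (sub_le_iff_le_add'.2 inf_le_left)
      (sub_le_iff_le_add'.2 (inf_le_right.trans (le_add_of_nonneg_left ha)))
  have h₂ : (a + b) ⊓ c - b ⊓ c ≤ a ⊓ c :=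
    le_inf (sub_le_comm.1 h₁) ((sub_le_self _ (le_inf hb hc)).trans inf_le_right)
  exact sub_le_iff_le_add.1 h₂

end LatticeOrderedGroup

theorem abs_map_le_map_abs {α β F : Type*} [Lattice α] [AddGroup α] [Lattice β] [AddGroup β]
    [FunLike F α β] [AddMonoidHomClass F α β] (L : F) (hL : Monotone L) (x : α) :
    |L x| ≤ L |x| :=
  abs_le'.2 ⟨hL (le_abs_self x), by simpa using hL (neg_le_abs x)⟩

section NormedLattice

variable [NormedAddCommGroup X] [Lattice X] [HasSolidNorm X] [IsOrderedAddMonoid X]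
  [NormedSpace ℝ X]

/- Nothing in the hypotheses ties the order to the `ℝ`-action; closedness of the positive
cone does, by dyadic approximation. -/
theorem HasSolidNorm.smul_nonneg {c : ℝ} (hc : 0 ≤ c) {x : X} (hx : 0 ≤ x) : 0 ≤ c • x := by
  have hdyadic (n k : ℕ) : 0 ≤ ((n : ℝ) / 2 ^ k) • x := by
    refine nonneg_of_two_pow_nsmul_nonneg (k := k) ?_
    rw [← Nat.cast_smul_eq_nsmul ℝ, smul_smul, Nat.cast_pow, Nat.cast_ofNat,
      mul_div_cancel₀ _ (by positivity), Nat.cast_smul_eq_nsmul]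
    exact nsmul_nonneg hx n
  have hlim : Tendsto (fun k : ℕ => ((⌊c * 2 ^ k⌋₊ : ℝ) / 2 ^ k) • x) atTop (𝓝 (c • x)) :=
    ((tendsto_nat_floor_mul_div_atTop hc).comp
      (tendsto_pow_atTop_atTop_of_one_lt one_lt_two)).smul_const x
  exact isClosed_nonneg.mem_of_tendsto hlim (Eventually.of_forall fun k => hdyadic _ k)

instance HasSolidNorm.posSMulMono : PosSMulMono ℝ X :=
  ⟨fun _ hc _ _ hab => by
    simpa [smul_sub] using HasSolidNorm.smul_nonneg hc (sub_nonneg.2 hab)⟩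

theorem abs_smul_le (c : ℝ) (x : X) : |c • x| ≤ |c| • |x| := by
  have key (y : X) : c • y ≤ |c| • |y| := by
    rcases le_total 0 c with hc | hc
    · rw [abs_of_nonneg hc]
      exact smul_le_smul_of_nonneg_left (le_abs_self y) hc
    · rw [abs_of_nonpos hc, ← neg_smul_neg]
      exact smul_le_smul_of_nonneg_left (neg_le_abs y) (neg_nonneg.2 hc)
  exact abs_le'.2 ⟨key x, by simpa only [smul_neg, abs_neg] using key (-x)⟩

def solidSubmodule (S : AddSubmonoid X) (hS : ∀ x y : X, |y| ≤ |x| → x ∈ S → y ∈ S) :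
    Submodule ℝ X where
  toAddSubmonoid := S
  smul_mem' c x hx := by
    refine hS (⌈|c|⌉₊ • |x|) _ ?_ (S.nsmul_mem (hS x |x| (abs_abs x).le hx) _)
    rw [abs_of_nonneg (nsmul_nonneg (abs_nonneg x) _), ← Nat.cast_smul_eq_nsmul ℝ]
    exact (abs_smul_le c x).trans
      (smul_le_smul_of_nonneg_right (Nat.le_ceil _) (abs_nonneg x))

theorem isClosedIdeal_solidSubmodule {S : AddSubmonoid X}
    {hS : ∀ x y : X, |y| ≤ |x| → x ∈ S → y ∈ S} (hc : IsClosed (S : Set X)) :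
    IsClosedIdeal (solidSubmodule S hS) :=
  ⟨hc, hS⟩

theorem IsPositiveFunc.monotone {f : StrongDual ℝ X} (hf : IsPositiveFunc f) : Monotone f :=
  (monotone_iff_map_nonneg f).2 hf

theorem IsPositiveOp.monotone {T : X →L[ℝ] X} (hT : IsPositiveOp T) : Monotone T :=
  (monotone_iff_map_nonneg T).2 hT

/-- The largest ideal contained in the kernel of a positive functional. -/
def absKer (f : StrongDual ℝ X) (hf : IsPositiveFunc f) : Submodule ℝ X :=
  solidSubmodule
    { carrier := {x | f |x| = 0}
      add_mem' := fun {x y} hx hy => le_antisymm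
        (by simpa [show f |x| = 0 from hx, show f |y| = 0 from hy] using
          hf.monotone (abs_add_le x y))
        (hf _ (abs_nonneg _))
      zero_mem' := by simp }
    (fun x y hxy hx => le_antisymm (hx ▸ hf.monotone hxy) (hf _ (abs_nonneg _)))

section absKer

variable {f : StrongDual ℝ X} (hf : IsPositiveFunc f)

theorem mem_absKer {x : X} : x ∈ absKer f hf ↔ f |x| = 0 := Iff.rfl

theorem isClosedIdeal_absKer : IsClosedIdeal (absKer f hf) :=
  isClosedIdeal_solidSubmodule <|
    isClosed_singleton.preimage (f.continuous.comp (continuous_id.sup continuous_neg))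

theorem absKer_ne_top (hf0 : f ≠ 0) : absKer f hf ≠ ⊤ := by
  refine fun htop => hf0 (ContinuousLinearMap.ext fun x => ?_)
  have hx : f |x| = 0 := (mem_absKer hf).1 (htop ▸ Submodule.mem_top)
  simpa [hx] using abs_map_le_map_abs f hf.monotone x

theorem map_mem_absKer {T : X →L[ℝ] X} (hT : IsPositiveOp T) {l : ℝ}
    (hfT : ∀ x, f (T x) = l * f x) {x : X} (hx : x ∈ absKer f hf) : T x ∈ absKer f hf := by
  refine le_antisymm ?_ (hf _ (abs_nonneg _))
  calc f |T x| ≤ f (T |x|) := hf.monotone (abs_map_le_map_abs T hT.monotone x)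
    _ = 0 := by rw [hfT, (mem_absKer hf).1 hx, mul_zero]

theorem strictlyPositiveFunc_of_absKer_eq_bot (h : absKer f hf = ⊥) : StrictlyPositiveFunc f := by
  refine fun x hx => (hf x hx.le).lt_of_ne fun hfx => hx.ne' ?_
  rw [← Submodule.mem_bot ℝ, ← h, mem_absKer, abs_of_nonneg hx.le, hfx]

end absKer

def disjointComplement (a : X) : Submodule ℝ X :=
  solidSubmodule
    { carrier := {y | |y| ⊓ |a| = 0}
      add_mem' := fun {x y} hx hy => le_antisymm
        (calc |x + y| ⊓ |a| ≤ (|x| + |y|) ⊓ |a| := inf_le_inf_right _ (abs_add_le x y)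
          _ ≤ |x| ⊓ |a| + |y| ⊓ |a| :=
            inf_add_le_inf_add_inf (abs_nonneg x) (abs_nonneg y) (abs_nonneg a)
          _ = 0 := by rw [show |x| ⊓ |a| = 0 from hx, show |y| ⊓ |a| = 0 from hy, add_zero])
        (le_inf (abs_nonneg _) (abs_nonneg a))
      zero_mem' := by simp }
    (fun x y hxy hx =>
      le_antisymm (hx ▸ inf_le_inf_right _ hxy) (le_inf (abs_nonneg _) (abs_nonneg a)))

theorem mem_disjointComplement {a y : X} : y ∈ disjointComplement a ↔ |y| ⊓ |a| = 0 := Iff.rfl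

theorem isClosedIdeal_disjointComplement (a : X) : IsClosedIdeal (disjointComplement a) :=
  isClosedIdeal_solidSubmodule <|
    isClosed_singleton.preimage ((continuous_id.sup continuous_neg).inf continuous_const)

theorem nonpos_of_forall_smul_le {x y : X} (h : ∀ t : ℝ, 0 ≤ t → t • x ≤ y) : x ≤ 0 := by
  have hlim : Tendsto (fun t : ℝ => t⁻¹ • y) atTop (𝓝 (0 : X)) := by
    simpa using (tendsto_inv_atTop_zero (𝕜 := ℝ)).smul_const y
  refine isClosed_Ici.mem_of_tendsto hlim ((eventually_gt_atTop 0).mono fun t ht => ?_)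
  simpa [smul_smul, inv_mul_cancel₀ ht.ne'] using
    smul_le_smul_of_nonneg_left (h t ht.le) (inv_nonneg.2 ht.le)

theorem rank_le_one_of_total (htot : ∀ z : X, 0 ≤ z ∨ z ≤ 0) : Module.rank ℝ X ≤ 1 := by
  rw [rank_le_one_iff]
  by_cases hpos : ∃ x : X, 0 < x
  · obtain ⟨x, hx⟩ := hpos
    refine ⟨x, fun y => ?_⟩
    have hcover (t : ℝ) : t • x ≤ y ∨ y ≤ t • x := by
      simpa [sub_nonneg, sub_nonpos] using htot (y - t • x)
    have hbelow : ∃ t : ℝ, t • x ≤ y := by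
      by_contra! h
      refine hx.not_ge (nonpos_of_forall_smul_le (y := -y) fun t _ => ?_)
      simpa [le_neg] using (hcover (-t)).resolve_left (h (-t))
    have habove : ∃ t : ℝ, y ≤ t • x := by
      by_contra! h
      exact hx.not_ge (nonpos_of_forall_smul_le fun t _ => (hcover t).resolve_right (h t))
    obtain ⟨t, -, hle, hge⟩ := isPreconnected_closed_iff.1 isPreconnected_univ
      {t : ℝ | t • x ≤ y} {t | y ≤ t • x}
      (isClosed_le (continuous_id.smul continuous_const) continuous_const)
      (isClosed_le continuous_const (continuous_id.smul continuous_const))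
      (fun t _ => hcover t) (hbelow.imp fun _ ht => ⟨trivial, ht⟩)
      (habove.imp fun _ ht => ⟨trivial, ht⟩)
    exact ⟨t, le_antisymm hle hge⟩
  · simp only [not_exists] at hpos
    refine ⟨0, fun y => ⟨0, ?_⟩⟩
    rw [smul_zero, eq_comm]
    rcases htot y with hy | hy
    · exact (hy.lt_or_eq.resolve_left (hpos y)).symm
    · exact neg_eq_zero.1 ((neg_nonneg.2 hy).lt_or_eq.resolve_left (hpos (-y))).symm

theorem rank_le_one_of_idealIrreducible_zero (h : IdealIrreducible (0 : X →L[ℝ] X)) :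
    Module.rank ℝ X ≤ 1 := by
  refine rank_le_one_of_total fun z => ?_
  rcases h _ (isClosedIdeal_disjointComplement z⁺) fun _ _ => zero_mem _ with hbot | htop
  · have hneg : z⁻ ∈ disjointComplement z⁺ := by
      rw [mem_disjointComplement, abs_of_nonneg (negPart_nonneg z),
        abs_of_nonneg (posPart_nonneg z), inf_comm, posPart_inf_negPart_eq_zero]
    rw [hbot, Submodule.mem_bot] at hneg
    exact Or.inl (negPart_eq_zero.1 hneg)
  · have hpos : z⁺ ∈ disjointComplement z⁺ := htop ▸ Submodule.mem_top
    rw [mem_disjointComplement, inf_idem, abs_of_nonneg (posPart_nonneg z)] at hpos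
    exact Or.inr (posPart_eq_zero.1 hpos)

theorem eq_zero_of_eigenvalue_nonpos {T : X →L[ℝ] X} (hT : IsPositiveOp T)
    {f : StrongDual ℝ X} (hf : IsPositiveFunc f) (hstrict : StrictlyPositiveFunc f) {l : ℝ}
    (hl : l ≤ 0) (hfT : ∀ x, f (T x) = l * f x) : T = 0 := by
  have hcone {x : X} (hx : 0 ≤ x) : T x = 0 := by
    refine ((hT x hx).lt_or_eq.resolve_left fun hTx => ?_).symm
    have := hstrict _ hTx
    nlinarith [hfT x, hf x hx]
  ext x
  rw [← posPart_sub_negPart x, map_sub, hcone (posPart_nonneg x), hcone (negPart_nonneg x)]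
  simp

end NormedLattice

theorem stmt3 [NormedAddCommGroup X] [Lattice X] [HasSolidNorm X] [IsOrderedAddMonoid X] [NormedSpace ℝ X]
    (hdim : 1 < Module.rank ℝ X)
    (T : X →L[ℝ] X) (hT : IsPositiveOp T) (hirr : IdealIrreducible T)
    (l : ℝ) (f : StrongDual ℝ X) (hf : IsPositiveFunc f) (hf0 : f ≠ 0)
    (heig : adjOp T f = l • f) :
    StrictlyPositiveFunc f ∧ 0 < l := by
  have hfT (x : X) : f (T x) = l * f x := by simpa [adjOp] using congrArg (· x) heig
  have hstrict : StrictlyPositiveFunc f :=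
    strictlyPositiveFunc_of_absKer_eq_bot hf <|
      (hirr _ (isClosedIdeal_absKer hf) fun _ => map_mem_absKer hf hT hfT).resolve_right
        (absKer_ne_top hf hf0)
  refine ⟨hstrict, lt_of_not_ge fun hl => hdim.not_ge ?_⟩
  have hT0 : T = 0 := eq_zero_of_eigenvalue_nonpos hT hf hstrict hl hfT
  exact rank_le_one_of_idealIrreducible_zero (hT0 ▸ hirr)
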